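/- arXiv:1610.04439 — 5 statements merged into one kernel-verified Lean document; each statement's English description precedes it below -/
import Mathlib

section
/- Let b_4 : ℕ → {0,1,2,3} be the fixed point starting with 0 of the morphism 0 ↦ 01, 1 ↦ 21, 2 ↦ 03, 3 ↦ 23, and let g_2 be the 19-uniform morphism from {0,1,2,3}* to {0,1}* defined by g_2(0) = 0000101001110110100, g_2(1) = 0011100010100111101, g_2(2) = 0000111100010110100, g_2(3) = 0011110110100111101. Then the infinite binary word g_2(b_4) avoids every conjugacy class of length at least 5: there is no finite word u with |u| ≥ 5 such that every cyclic conjugate of u is a factor of g_2(b_4). -/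
/-!
Let `x` be a fixed point of `mb4` and `X = g₂(x)`. The letters of `x` alternate in parity, `x`
reads `0, 2, 0, 2, …` at even positions, and `x (2n+1)` carries the high bit of `x n`.

If all conjugates of `u`, of length `n`, are factors of `X`, then so are all factors of length `n`
of the periodic word `uuu⋯`. Every factor of length at most 19 of `X` lies in `g₂(ab)` for a pair
`ab` of letters of different parity, and a finite check rules out `n ≤ 14` and `n = 19`. Otherwise
`n ≥ 15`; since a factor of length 14 of `X` determines its position modulo 19, `n = 19m` and the
occurrences of the factors of `uuu⋯` are aligned with the blocks of `X`. Decoding the blocks gives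
an `m`-periodic word all of whose factors of length `m + 1` are factors of `x`. Desubstituting by
`mb4` halves such a period, and an odd period contradicts the parity alternation.
-/

/-- `u` is a factor of the infinite word `x`. -/
def IsFactorOfInf {α : Type*} (u : List α) (x : ℕ → α) : Prop :=
  ∃ i : ℕ, u = (List.range u.length).map fun j => x (i + j)

/-- The morphism `0 ↦ 01, 1 ↦ 21, 2 ↦ 03, 3 ↦ 23` whose fixed point
starting with `0` is `b₄`. -/
def mb4 : Fin 4 → List (Fin 4) := ![[0, 1], [2, 1], [0, 3], [2, 3]]

/-- The 19-uniform morphism `g₂ : {0,1,2,3}* → {0,1}*`. -/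
def g2 : Fin 4 → List (Fin 2) :=
  ![[0, 0, 0, 0, 1, 0, 1, 0, 0, 1, 1, 1, 0, 1, 1, 0, 1, 0, 0],
    [0, 0, 1, 1, 1, 0, 0, 0, 1, 0, 1, 0, 0, 1, 1, 1, 1, 0, 1],
    [0, 0, 0, 0, 1, 1, 1, 1, 0, 0, 0, 1, 0, 1, 1, 0, 1, 0, 0],
    [0, 0, 1, 1, 1, 1, 0, 1, 1, 0, 1, 0, 0, 1, 1, 1, 1, 0, 1]]

open Function

section Words

variable {α : Type*}

def window (x : ℕ → α) (p n : ℕ) : List α := (List.range n).map fun k => x (p + k)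

@[simp]
theorem length_window (x : ℕ → α) (p n : ℕ) : (window x p n).length = n := by
  simp [window]

@[simp]
theorem getElem_window (x : ℕ → α) (p n k : ℕ) (hk : k < (window x p n).length) :
    (window x p n)[k] = x (p + k) := by
  simp [window]

theorem window_congr {x y : ℕ → α} {p q n : ℕ} (h : ∀ k < n, x (p + k) = y (q + k)) :
    window x p n = window y q n :=
  List.map_congr_left fun k hk => h k (List.mem_range.mp hk)

theorem window_rotate {y : ℕ → α} {n : ℕ} (hy : Periodic y n) (i k : ℕ) :
    (window y i n).rotate k = window y (i + k) n := by
  refine List.ext_getElem (by simp) fun j hj _ => ?_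
  have hshift : Periodic (fun t => y (i + t)) n := fun t => by simp only [← add_assoc, hy _]
  simp only [List.getElem_rotate, getElem_window, length_window]
  rw [hshift.map_mod_nat, add_assoc, add_comm j]

def FactorsSubset (ℓ : ℕ) (y x : ℕ → α) : Prop := ∀ i, ∃ p, ∀ k < ℓ, x (p + k) = y (i + k)

theorem FactorsSubset.mono {ℓ ℓ' : ℕ} {y x : ℕ → α} (h : FactorsSubset ℓ y x) (hle : ℓ' ≤ ℓ) :
    FactorsSubset ℓ' y x := fun i =>
  (h i).imp fun _ hp k hk => hp k (hk.trans_le hle)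

theorem factorsSubset_cycle {u : List α} (hu : u ≠ []) (d : α) {x : ℕ → α}
    (h : ∀ v w : List α, u = w ++ v → IsFactorOfInf (v ++ w) x) :
    FactorsSubset u.length (fun t => u.getD (t % u.length) d) x := by
  intro i
  have hn : 0 < u.length := List.length_pos_iff.mpr hu
  have hr : i % u.length ≤ u.length := (Nat.mod_lt _ hn).le
  obtain ⟨p, hp⟩ := h _ _ (List.take_append_drop (i % u.length) u).symm
  rw [← List.rotate_eq_drop_append_take hr] at hp
  refine ⟨p, fun k hk => ?_⟩
  have hk' : k < (u.rotate (i % u.length)).length := by simpa using hk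
  have hx := congrArg (·[k]?) hp
  simp only [List.getElem?_map, List.getElem?_range hk', Option.map_some,
    List.getElem?_eq_getElem hk', List.getElem_rotate, Option.some.injEq] at hx
  rw [← hx, ← List.getD_eq_getElem _ d, Nat.add_mod_mod, add_comm k]

end Words

theorem mb4_eq (a : Fin 4) :
    mb4 a = [⟨2 * (a.val % 2), by omega⟩, ⟨2 * (a.val / 2) + 1, by omega⟩] := by
  revert a; decide

def IsMb4Fixed (x : ℕ → Fin 4) : Prop := ∀ n, [x (2 * n), x (2 * n + 1)] = mb4 (x n)

namespace IsMb4Fixed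

variable {x : ℕ → Fin 4}

theorem val_two_mul (h : IsMb4Fixed x) (n : ℕ) : (x (2 * n)).val = 2 * ((x n).val % 2) := by
  have hn := h n
  rw [mb4_eq, List.cons.injEq] at hn
  rw [hn.1]

theorem val_two_mul_add_one (h : IsMb4Fixed x) (n : ℕ) :
    (x (2 * n + 1)).val = 2 * ((x n).val / 2) + 1 := by
  have hn := h n
  rw [mb4_eq, List.cons.injEq, List.cons.injEq] at hn
  rw [hn.2.1]

theorem val_mod_two (h : IsMb4Fixed x) (k : ℕ) : (x k).val % 2 = k % 2 := by
  obtain ⟨n, rfl | rfl⟩ := Nat.even_or_odd' k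
  · rw [h.val_two_mul]; omega
  · rw [h.val_two_mul_add_one]; omega

theorem val_mod_two_of_factorsSubset (h : IsMb4Fixed x) {Z : ℕ → Fin 4}
    (hZ : FactorsSubset 2 Z x) (t : ℕ) : (Z t).val % 2 = ((Z 0).val + t) % 2 := by
  induction t with
  | zero => simp
  | succ t ih =>
    obtain ⟨p, hp⟩ := hZ t
    have h0 : (Z t).val % 2 = p % 2 := by
      rw [← add_zero t, ← hp 0 (by omega)]; exact h.val_mod_two _
    have h1 : (Z (t + 1)).val % 2 = (p + 1) % 2 := by
      rw [← hp 1 (by omega)]; exact h.val_mod_two _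
    omega

theorem even_of_periodic (h : IsMb4Fixed x) {Z : ℕ → Fin 4} {m : ℕ} (hper : Periodic Z m)
    (hZ : FactorsSubset 2 Z x) : Even m := by
  have hm := h.val_mod_two_of_factorsSubset hZ m
  rw [show m = 0 + m by simp, hper] at hm
  exact Nat.even_iff.mpr (by omega)

theorem exists_halved_period (h : IsMb4Fixed x) {Z : ℕ → Fin 4} {m : ℕ} (hm : 0 < m)
    (hper : Periodic Z (2 * m)) (hZ : FactorsSubset (2 * m + 1) Z x) :
    ∃ W : ℕ → Fin 4, Periodic W m ∧ FactorsSubset (m + 1) W x := by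
  set ε := (Z 0).val % 2
  have hpar := h.val_mod_two_of_factorsSubset (hZ.mono (by omega))
  have heven : ∀ t, (Z (ε + 2 * t)).val % 2 = 0 := fun t => by have := hpar (ε + 2 * t); omega
  -- `x` reads `0, 2, 0, 2, …` at even positions
  have halt : ∀ t, (Z (ε + 2 * (t + 1))).val / 2 ≠ (Z (ε + 2 * t)).val / 2 := by
    intro t
    obtain ⟨s, hs⟩ := hZ (ε + 2 * t)
    have e0 : x s = Z (ε + 2 * t) := by simpa using hs 0 (by omega)
    have e2 : x (s + 2) = Z (ε + 2 * (t + 1)) := by convert hs 2 (by omega) using 2; ring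
    obtain ⟨τ, rfl⟩ : ∃ τ, s = 2 * τ :=
      ⟨s / 2, by have := h.val_mod_two s; rw [e0] at this; have := heven t; omega⟩
    rw [← e0, ← e2, show 2 * τ + 2 = 2 * (τ + 1) by ring, h.val_two_mul, h.val_two_mul,
      h.val_mod_two, h.val_mod_two]
    omega
  -- `W t` is the letter `a` with `mb4 a = [Z (ε + 2 * t), Z (ε + 2 * t + 1)]`
  refine ⟨fun t => ⟨(Z (ε + 2 * t)).val / 2 + 2 * ((Z (ε + 2 * t + 1)).val / 2), by omega⟩,
    fun t => ?_, fun t => ?_⟩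
  · simp only [show ε + 2 * (t + m) = ε + 2 * t + 2 * m by ring,
      show ε + 2 * t + 2 * m + 1 = ε + 2 * t + 1 + 2 * m by ring, hper _]
  · obtain ⟨s, hs⟩ := hZ (ε + 2 * t + 1)
    have e0 : x s = Z (ε + 2 * t + 1) := by simpa using hs 0 (by omega)
    obtain ⟨σ, rfl⟩ : ∃ σ, s = 2 * σ + 1 :=
      ⟨s / 2, by have := h.val_mod_two s; rw [e0] at this; have := hpar (ε + 2 * t + 1); omega⟩
    refine ⟨σ, fun j hj => Fin.ext ?_⟩
    dsimp only
    have hσ := (x (σ + j)).isLt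
    rcases j with _ | i
    · have e1 : x (2 * (σ + 1)) = Z (ε + 2 * (t + 1)) := by
        convert hs 1 (by omega) using 2 <;> ring
      have hhi := congrArg Fin.val e0
      have hlo := congrArg Fin.val e1
      rw [h.val_two_mul_add_one] at hhi
      rw [h.val_two_mul, h.val_mod_two] at hlo
      have := halt t
      have := heven t
      have := h.val_mod_two σ
      simp only [add_zero] at hσ ⊢
      omega
    · have e1 : x (2 * (σ + (i + 1))) = Z (ε + 2 * (t + (i + 1))) := by
        convert hs (2 * i + 1) (by omega) using 2 <;> ring
      have e2 : x (2 * (σ + (i + 1)) + 1) = Z (ε + 2 * (t + (i + 1)) + 1) := by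
        convert hs (2 * i + 2) (by omega) using 2 <;> ring
      have hlo := congrArg Fin.val e1
      have hhi := congrArg Fin.val e2
      rw [h.val_two_mul] at hlo
      rw [h.val_two_mul_add_one] at hhi
      omega

theorem not_factorsSubset_of_periodic (h : IsMb4Fixed x) :
    ∀ {m : ℕ}, 0 < m → ∀ {Z : ℕ → Fin 4}, Periodic Z m → ¬ FactorsSubset (m + 1) Z x := by
  intro m
  induction m using Nat.strong_induction_on with
  | _ m ih =>
    intro hm Z hper hZ
    obtain ⟨m', rfl⟩ := h.even_of_periodic hper (hZ.mono (by omega))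
    rw [← two_mul] at hper hZ
    obtain ⟨W, hWper, hW⟩ := h.exists_halved_period (by omega) hper hZ
    exact ih m' (by omega) (by omega) hWper hW

end IsMb4Fixed

def g2Word (x : ℕ → Fin 4) : ℕ → Fin 2 := fun n => (g2 (x (n / 19))).getD (n % 19) 0

theorem g2Word_block (x : ℕ → Fin 4) {t j : ℕ} (hj : j < 19) :
    g2Word x (19 * t + j) = (g2 (x t)).getD j 0 := by
  simp only [g2Word]
  rw [show (19 * t + j) / 19 = t by omega, show (19 * t + j) % 19 = j by omega]

theorem g2Word_add (x : ℕ → Fin 4) (p : ℕ) {k : ℕ} (hk : k < 19) :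
    g2Word x (p + k) = (g2 (x (p / 19)) ++ g2 (x (p / 19 + 1))).getD (p % 19 + k) 0 := by
  have hlen : ∀ a, (g2 a).length = 19 := by decide
  by_cases hlt : p % 19 + k < 19
  · rw [List.getD_append _ _ _ _ (by rw [hlen]; exact hlt), ← g2Word_block x hlt]
    congr 1; omega
  · rw [List.getD_append_right _ _ _ _ (by rw [hlen]; omega), hlen, ← g2Word_block x (by omega)]
    congr 1; omega

def g2Factor (a b : Fin 4) (r n : ℕ) : List (Fin 2) := ((g2 a ++ g2 b).drop r).take n

theorem window_g2Word (x : ℕ → Fin 4) (p : ℕ) {n : ℕ} (hn : n ≤ 19) :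
    window (g2Word x) p n = g2Factor (x (p / 19)) (x (p / 19 + 1)) (p % 19) n := by
  have hlen : ∀ a, (g2 a).length = 19 := by decide
  refine List.ext_getElem (by simp [g2Factor, hlen]; omega) fun k hk _ => ?_
  simp only [getElem_window, g2Factor, List.getElem_take, List.getElem_drop]
  rw [g2Word_add x p (by simp at hk; omega), List.getD_eq_getElem]

def b4Pairs : List (Fin 4 × Fin 4) :=
  [(0, 1), (0, 3), (1, 0), (1, 2), (2, 1), (2, 3), (3, 0), (3, 2)]

theorem IsMb4Fixed.mem_b4Pairs {x : ℕ → Fin 4} (h : IsMb4Fixed x) (t : ℕ) :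
    (x t, x (t + 1)) ∈ b4Pairs := by
  have hpairs : ∀ a b : Fin 4, a.val % 2 ≠ b.val % 2 → (a, b) ∈ b4Pairs := by decide
  exact hpairs _ _ (by rw [h.val_mod_two, h.val_mod_two]; omega)

def g2Factors (n : ℕ) : List (List (Fin 2)) :=
  (b4Pairs ×ˢ List.range 19).map fun q => g2Factor q.1.1 q.1.2 q.2 n

theorem IsMb4Fixed.window_g2Word_mem {x : ℕ → Fin 4} (h : IsMb4Fixed x) (p : ℕ) {n : ℕ}
    (hn : n ≤ 19) : window (g2Word x) p n ∈ g2Factors n := by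
  rw [window_g2Word x p hn]
  exact List.mem_map_of_mem
    (List.mem_product.mpr ⟨h.mem_b4Pairs _, List.mem_range.mpr (Nat.mod_lt _ (by omega))⟩)

theorem g2Factor_offset_eq : ∀ P ∈ b4Pairs, ∀ P' ∈ b4Pairs, ∀ r < 19, ∀ r' < 19,
    g2Factor P.1 P.2 r 14 = g2Factor P'.1 P'.2 r' 14 → r = r' := by
  decide +kernel

theorem IsMb4Fixed.mod_eq_of_window_eq {x : ℕ → Fin 4} (h : IsMb4Fixed x) {p q : ℕ}
    (hpq : window (g2Word x) p 14 = window (g2Word x) q 14) : p % 19 = q % 19 := by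
  rw [window_g2Word x p (by omega), window_g2Word x q (by omega)] at hpq
  exact g2Factor_offset_eq _ (h.mem_b4Pairs _) _ (h.mem_b4Pairs _) _ (Nat.mod_lt _ (by omega)) _
    (Nat.mod_lt _ (by omega)) hpq

set_option maxHeartbeats 1000000 in
theorem exists_rotate_not_mem_g2Factors {n : ℕ} (h5 : 5 ≤ n) (hn : n ≤ 14 ∨ n = 19) :
    ∀ w ∈ g2Factors n, ∃ k < n, w.rotate k ∉ g2Factors n := by
  -- comparing binary values instead of words makes the kernel computation much cheaper
  have hval : ∀ w ∈ g2Factors n, ∃ k < n, Nat.ofDigits 2 ((w.rotate k).map Fin.val) ∉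
      (g2Factors n).map fun v => Nat.ofDigits 2 (v.map Fin.val) := by
    obtain hn | rfl := hn
    · interval_cases n <;> decide +kernel
    · decide +kernel
  intro w hw
  obtain ⟨k, hk, hnot⟩ := hval w hw
  exact ⟨k, hk, fun hmem => hnot (List.mem_map_of_mem hmem)⟩

theorem IsMb4Fixed.not_factorsSubset_g2Word_of_le {x : ℕ → Fin 4} (h : IsMb4Fixed x)
    {y : ℕ → Fin 2} {n : ℕ} (hy : Periodic y n) (h5 : 5 ≤ n) (hn : n ≤ 14 ∨ n = 19) :
    ¬ FactorsSubset n y (g2Word x) := by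
  intro hf
  have hmem : ∀ i, window y i n ∈ g2Factors n := fun i => by
    obtain ⟨p, hp⟩ := hf i
    rw [← window_congr hp]
    exact h.window_g2Word_mem p (by omega)
  obtain ⟨k, -, hk⟩ := exists_rotate_not_mem_g2Factors h5 hn _ (hmem 0)
  exact hk (by rw [window_rotate hy]; exact hmem _)

theorem IsMb4Fixed.exists_aligned_factors {x : ℕ → Fin 4} (h : IsMb4Fixed x) {y : ℕ → Fin 2}
    {n : ℕ} (hy : Periodic y n) (hn : 15 ≤ n) (hf : FactorsSubset n y (g2Word x)) :
    ∃ m δ, n = 19 * m ∧ ∀ c, ∃ s, ∀ k < n, g2Word x (19 * s + 6 + k) = y (19 * c + k + δ) := by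
  choose p hp using hf
  have hwin : ∀ i, window (g2Word x) (p i) 14 = window y i 14 :=
    fun i => window_congr fun k hk => hp i k (by omega)
  have hstep : ∀ i, p (i + 1) % 19 = (p i + 1) % 19 := fun i =>
    h.mod_eq_of_window_eq <| (hwin (i + 1)).trans <| window_congr fun k hk => by
      rw [add_assoc, add_assoc, hp i (1 + k) (by omega)]
  have hchain : ∀ i, p i % 19 = (p 0 + i) % 19 := by
    intro i
    induction i with
    | zero => rfl
    | succ i ih => have := hstep i; omega
  have hperiod : p n % 19 = p 0 % 19 :=
    h.mod_eq_of_window_eq <| (hwin n).trans <| (window_congr fun k _ => by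
      rw [add_comm n, hy, zero_add]).trans (hwin 0).symm
  obtain ⟨δ, hδ⟩ : ∃ δ, (p 0 + δ) % 19 = 6 := ⟨(25 - p 0 % 19) % 19, by omega⟩
  refine ⟨n / 19, δ, by have := hchain n; omega, fun c => ⟨p (19 * c + δ) / 19, fun k hk => ?_⟩⟩
  have := hchain (19 * c + δ)
  rw [show 19 * (p (19 * c + δ) / 19) + 6 = p (19 * c + δ) by omega, hp _ k hk]
  ring_nf

theorem eq_of_g2_prefix {a b : Fin 4} (h : ∀ j < 6, (g2 a).getD j 0 = (g2 b).getD j 0) : a = b := by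
  revert a b; decide

theorem eq_of_g2_suffix {a b : Fin 4}
    (h : ∀ j < 13, (g2 a).getD (6 + j) 0 = (g2 b).getD (6 + j) 0) : a = b := by
  revert a b; decide

/-- A factor of `g2Word x` of length `19 * m` starting at offset `6` of a block covers the last 13
letters of one block and the first 6 letters of each of the next `m` blocks, and each of these
pieces determines its letter of `x`. -/
theorem exists_factorsSubset_of_aligned {x : ℕ → Fin 4} {w : ℕ → Fin 2} {m : ℕ} (hm : 2 ≤ m)
    (hw : Periodic w (19 * m))
    (hf : ∀ c, ∃ s, ∀ k < 19 * m, g2Word x (19 * s + 6 + k) = w (19 * c + k)) :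
    ∃ Z : ℕ → Fin 4, Periodic Z m ∧ FactorsSubset (m + 1) Z x := by
  choose s hs using hf
  have hread : ∀ c t j, j < 19 → 6 ≤ 19 * t + j → 19 * t + j < 19 * m + 6 →
      (g2 (x (s c + t))).getD j 0 = w (19 * c + (19 * t + j - 6)) := by
    intro c t j hj h6 hlt
    rw [← g2Word_block x hj, ← hs c _ (by omega)]
    congr 1; omega
  have hblock : ∀ c i, i < m → x (s c + 1 + i) = x (s (c + i) + 1) := fun c i hi =>
    eq_of_g2_prefix fun j hj => by
      rw [add_assoc, hread c (1 + i) j (by omega) (by omega) (by omega),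
        hread (c + i) 1 j (by omega) (by omega) (by omega)]
      congr 1; omega
  have hfirst : ∀ c, x (s (c + 1)) = x (s c + 1) := fun c =>
    eq_of_g2_suffix fun j hj => by
      rw [← add_zero (s (c + 1)), hread (c + 1) 0 (6 + j) (by omega) (by omega) (by omega),
        hread c 1 (6 + j) (by omega) (by omega) (by omega)]
      congr 1; omega
  refine ⟨fun c => x (s c + 1), fun c => eq_of_g2_prefix fun j hj => ?_, fun t => ⟨s (t + 1), ?_⟩⟩
  · rw [hread (c + m) 1 j (by omega) (by omega) (by omega),
      hread c 1 j (by omega) (by omega) (by omega),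
      show 19 * (c + m) + (19 * 1 + j - 6) = 19 * c + (19 * 1 + j - 6) + 19 * m by ring, hw]
  · rintro (_ | i) hi
    · simpa using hfirst t
    · rw [show s (t + 1) + (i + 1) = s (t + 1) + 1 + i by ring, hblock (t + 1) i (by omega)]
      congr 3; omega

theorem stmt_3_general (b4 : ℕ → Fin 4)
    (hfix : ∀ n, [b4 (2 * n), b4 (2 * n + 1)] = mb4 (b4 n)) :
    ¬ ∃ u : List (Fin 2), 5 ≤ u.length ∧
        ∀ v w : List (Fin 2), u = w ++ v →
          IsFactorOfInf (v ++ w) (fun n => (g2 (b4 (n / 19))).getD (n % 19) 0) := by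
  rintro ⟨u, hu5, hconj⟩
  have h : IsMb4Fixed b4 := hfix
  set y : ℕ → Fin 2 := fun t => u.getD (t % u.length) 0
  have hy : Periodic y u.length := fun t => by simp only [y, Nat.add_mod_right]
  have hf : FactorsSubset u.length y (g2Word b4) :=
    factorsSubset_cycle (List.ne_nil_of_length_pos (by omega)) 0 hconj
  by_cases hshort : u.length ≤ 14 ∨ u.length = 19
  · exact h.not_factorsSubset_g2Word_of_le hy hu5 hshort hf
  obtain ⟨m, δ, hm, hal⟩ := h.exists_aligned_factors hy (by omega) hf
  rw [hm] at hy
  obtain ⟨Z, hZ, hZf⟩ := exists_factorsSubset_of_aligned (w := fun t => y (t + δ)) (by omega)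
    (hy.add_const δ) (by rwa [← hm])
  exact h.not_factorsSubset_of_periodic (by omega) hZ hZf

/-- If `b₄` is the fixed point starting with `0` of the morphism
`0 ↦ 01, 1 ↦ 21, 2 ↦ 03, 3 ↦ 23`, then the infinite binary word `g₂(b₄)`
(the concatenation `g₂(b₄ 0) g₂(b₄ 1) …`, position `n` being letter `n % 19`
of `g₂(b₄ (n / 19))`) avoids every conjugacy class of length at least `5`:
there is no word `u` with `|u| ≥ 5` all of whose cyclic conjugates are
factors of `g₂(b₄)`. -/
theorem stmt_3 (b4 : ℕ → Fin 4) (hb0 : b4 0 = 0)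
    (hfix : ∀ n, [b4 (2 * n), b4 (2 * n + 1)] = mb4 (b4 n)) :
    ¬ ∃ u : List (Fin 2), 5 ≤ u.length ∧
        ∀ v w : List (Fin 2), u = w ++ v →
          IsFactorOfInf (v ++ w) (fun n => (g2 (b4 (n / 19))).getD (n % 19) 0) :=
  stmt_3_general b4 hfix
end

section
/- Let b_4 : ℕ → {0,1,2,3} be the fixed point starting with 0 of the morphism 0 ↦ 01, 1 ↦ 21, 2 ↦ 03, 3 ↦ 23, and let g_3 be the 4-uniform morphism from {0,1,2,3}* to {0,1,2}* defined by g_3(0) = 0010, g_3(1) = 1122, g_3(2) = 0200, g_3(3) = 1212. Then the infinite ternary word g_3(b_4) avoids every conjugacy class of length at least 3: there is no finite word u with |u| ≥ 3 such that every cyclic conjugate of u is a factor of g_3(b_4). -/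
/-- The 4-uniform morphism `g₃ : {0,1,2,3}* → {0,1,2}*`. -/
def g3 : Fin 4 → List (Fin 3) :=
  ![[0, 0, 1, 0], [1, 1, 2, 2], [0, 2, 0, 0], [1, 2, 1, 2]]

section Words

variable {α β : Type*}

def WindowsOccur (M : ℕ) (z x : ℕ → α) : Prop :=
  ∀ k, ∃ p, ∀ j < M, x (p + j) = z (k + j)

def Synchronizing (N L : ℕ) (x : ℕ → α) : Prop :=
  ∀ i i', (∀ j < N, x (i + j) = x (i' + j)) → i ≡ i' [MOD L]

def PhaseAligned (L M : ℕ) (z x : ℕ → α) : Prop :=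
  ∀ k p, (∀ j < M, x (p + j) = z (k + j)) → p ≡ k [MOD L]

/-- `x = g(w)` for an `L`-uniform morphism `g`; the default `d` is never read when all the
images `g b` have length `L`. -/
def IsUniformImage (g : β → List α) (L : ℕ) (d : α) (w : ℕ → β) (x : ℕ → α) : Prop :=
  ∀ q, ∀ r < L, x (L * q + r) = (g (w q)).getD r d

theorem isUniformImage_div_mod (g : β → List α) (L : ℕ) (d : α) (w : ℕ → β) :
    IsUniformImage g L d w (fun n => (g (w (n / L))).getD (n % L) d) := fun q r hr => by
  simp only [Nat.mul_add_div (by omega : 0 < L), Nat.div_eq_of_lt hr, Nat.mul_add_mod,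
    Nat.mod_eq_of_lt hr, add_zero]

theorem windowsOccur_of_forall_conjugate {u : List α} {x : ℕ → α} (d : α)
    (h : ∀ v w, u = w ++ v → IsFactorOfInf (v ++ w) x) :
    WindowsOccur u.length (fun t => u.getD (t % u.length) d) x := by
  intro k
  obtain ⟨p, hp⟩ := h _ _ (List.take_append_drop (k % u.length) u).symm
  rw [← List.rotate_eq_drop_append_take_mod] at hp
  refine ⟨p, fun j hj => ?_⟩
  have hj' : j < (u.rotate k).length := by simpa using hj
  have := congrArg (·[j]?) hp
  simp only [List.getElem?_map, List.getElem?_range hj', Option.map_some,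
    List.getElem?_eq_getElem hj', List.getElem_rotate, Option.some_inj] at this
  show _ = u.getD ((k + j) % u.length) d
  rw [← this, List.getD_eq_getElem?_getD, List.getElem?_eq_getElem (Nat.mod_lt _ (by omega)),
    Option.getD_some, add_comm]

theorem WindowsOccur.shift {M : ℕ} {z x : ℕ → α} (h : WindowsOccur M z x) (s : ℕ) :
    WindowsOccur M (fun t => z (s + t)) x := fun k => by
  simpa only [add_assoc] using h (s + k)

theorem Function.Periodic.rotate_map_range {z : ℕ → α} {n : ℕ} (hz : Function.Periodic z n)
    (k : ℕ) : ((List.range n).map z).rotate k = (List.range n).map fun j => z (k + j) := by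
  refine List.ext_getElem (by simp) fun j _ _ => ?_
  simp only [List.getElem_rotate, List.getElem_map, List.getElem_range, List.length_map,
    List.length_range]
  rw [hz.map_mod_nat, add_comm]

theorem Synchronizing.exists_phaseAligned {N L M : ℕ} {z x : ℕ → α} (hx : Synchronizing N L x)
    (hL : 0 < L) (hNM : N < M) (h : WindowsOccur M z x) :
    ∃ s, PhaseAligned L M (fun t => z (s + t)) x := by
  choose P hP using h
  -- the windows of `z` at `k` and `k + 1` overlap in `N` letters
  have phase : ∀ k, P k ≡ P 0 + k [MOD L] := by
    intro k
    induction k with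
    | zero => rfl
    | succ k ih =>
      refine .trans (hx _ _ fun j hj => ?_) (ih.add_right 1)
      rw [hP _ j (by omega), add_assoc (P k), hP k _ (by omega), add_assoc]
  refine ⟨(L - 1) * P 0, fun k p hp => ?_⟩
  calc p ≡ P ((L - 1) * P 0 + k) [MOD L] :=
        hx _ _ fun j hj => by rw [hp j (by omega), hP _ j (by omega), add_assoc]
    _ ≡ P 0 + ((L - 1) * P 0 + k) [MOD L] := phase _
    _ = L * P 0 + k := by
        rw [← add_assoc, ← one_add_mul, Nat.add_sub_cancel' (by omega : 1 ≤ L)]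
    _ ≡ k [MOD L] := by simp [Nat.ModEq]

theorem PhaseAligned.dvd {L M n : ℕ} {z x : ℕ → α} (hal : PhaseAligned L M z x)
    (hz : Function.Periodic z n) (h : WindowsOccur M z x) : L ∣ n := by
  obtain ⟨p, hp⟩ := h 0
  have h0 := hal 0 p hp
  have hn := hal n p fun j hj => by rw [hp j hj, add_comm n, hz, zero_add]
  exact (Nat.modEq_zero_iff_dvd).1 (hn.symm.trans h0)

theorem IsUniformImage.exists_decoding {g : β → List α} {L M : ℕ} {d : α} {w : ℕ → β}
    {z x : ℕ → α} (hx : IsUniformImage g L d w x) (hal : PhaseAligned L M z x) (hLM : L ≤ M)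
    (h : WindowsOccur M z x) : ∃ y, IsUniformImage g L d y z := by
  choose P hP using h
  refine ⟨fun t => w (P (L * t) / L), fun t r hr => ?_⟩
  obtain ⟨q, hq⟩ : L ∣ P (L * t) :=
    Nat.dvd_of_mod_eq_zero (by simpa [Nat.ModEq] using hal _ _ (hP (L * t)))
  show z (L * t + r) = (g (w (P (L * t) / L))).getD r d
  rw [← hP _ r (by omega), hq, Nat.mul_div_cancel_left _ (by omega), hx _ r hr]

theorem IsUniformImage.periodic {g : β → List α} {L m : ℕ} {d : α} {y : ℕ → β} {z : ℕ → α}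
    (hy : IsUniformImage g L d y z) (hz : Function.Periodic z (L * m))
    (hg : ∀ c c', (∀ r < L, (g c).getD r d = (g c').getD r d) → c = c') :
    Function.Periodic y m := fun t =>
  hg _ _ fun r hr => by rw [← hy _ r hr, ← hy _ r hr, mul_add, add_right_comm, hz]

end Words

theorem isUniformImage_mb4_self {b4 : ℕ → Fin 4}
    (hfix : ∀ n, [b4 (2 * n), b4 (2 * n + 1)] = mb4 (b4 n)) : IsUniformImage mb4 2 0 b4 b4 :=
  fun q r hr => by
    rw [← hfix q]
    interval_cases r <;> rfl

theorem mb4_eq_of_getD_eq : ∀ c c' : Fin 4,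
    (∀ r < 2, (mb4 c).getD r 0 = (mb4 c').getD r 0) → c = c' := by
  decide

section FixedPoint

variable {b4 : ℕ → Fin 4}

theorem val_mod_two_of_mb4_fixed (hb : IsUniformImage mb4 2 0 b4 b4) (i : ℕ) :
    (b4 i).val % 2 = i % 2 := by
  have key : ∀ c : Fin 4, ∀ r : Fin 2, ((mb4 c).getD r 0).val % 2 = r := by decide
  conv_lhs => rw [← Nat.div_add_mod i 2, hb _ _ (Nat.mod_lt _ two_pos)]
  exact key _ ⟨i % 2, Nat.mod_lt _ two_pos⟩

theorem synchronizing_of_mb4_fixed (hb : IsUniformImage mb4 2 0 b4 b4) :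
    Synchronizing 1 2 b4 := fun i i' h => by
  have := congrArg (fun c : Fin 4 => c.val % 2) (h 0 one_pos)
  simpa [Nat.ModEq, val_mod_two_of_mb4_fixed hb] using this

theorem val_mod_two_ne_of_mb4_decoding {y z : ℕ → Fin 4} {M : ℕ} (hM : 3 ≤ M)
    (hb : IsUniformImage mb4 2 0 b4 b4) (hy : IsUniformImage mb4 2 0 y z)
    (hal : PhaseAligned 2 M z b4) (h : WindowsOccur M z b4) (t : ℕ) :
    (y t).val % 2 ≠ (y (t + 1)).val % 2 := by
  have first : ∀ c c' : Fin 4, (mb4 c).getD 0 0 = (mb4 c').getD 0 0 →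
      c.val % 2 = c'.val % 2 := by decide
  obtain ⟨p, hp⟩ := h (2 * t)
  obtain ⟨q, rfl⟩ : ∃ q, p = 2 * q :=
    ⟨p / 2, by have := hal _ _ hp; unfold Nat.ModEq at this; omega⟩
  have h0 : (y t).val % 2 = (b4 q).val % 2 :=
    first _ _ (by rw [← hy t 0 two_pos, ← hb q 0 two_pos]; exact (hp 0 (by omega)).symm)
  have h1 : (y (t + 1)).val % 2 = (b4 (q + 1)).val % 2 :=
    first _ _ (by
      rw [← hy _ 0 two_pos, ← hb _ 0 two_pos]
      simpa [mul_add] using (hp 2 (by omega)).symm)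
  rw [h0, h1, val_mod_two_of_mb4_fixed hb, val_mod_two_of_mb4_fixed hb]
  omega

theorem windowsOccur_of_mb4_decoding {y z : ℕ → Fin 4} {m : ℕ} (hm : 0 < m)
    (hb : IsUniformImage mb4 2 0 b4 b4) (hy : IsUniformImage mb4 2 0 y z)
    (hal : PhaseAligned 2 (2 * m + 1) z b4) (h : WindowsOccur (2 * m + 1) z b4) :
    WindowsOccur (m + 1) y b4 := by
  have second : ∀ c c' : Fin 4, c.val % 2 = c'.val % 2 →
      (mb4 c).getD 1 0 = (mb4 c').getD 1 0 → c = c' := by decide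
  intro k
  obtain ⟨p, hp⟩ := h (2 * k + 1)
  obtain ⟨q, rfl⟩ : ∃ q, p = 2 * q + 1 :=
    ⟨p / 2, by have := hal _ _ hp; unfold Nat.ModEq at this; omega⟩
  have full : ∀ i, 1 ≤ i → i ≤ m → b4 (q + i) = y (k + i) := fun i h1 h2 =>
    mb4_eq_of_getD_eq _ _ fun r hr => by
      rw [← hb _ r hr, ← hy _ r hr]
      convert hp (2 * i - 1 + r) (by omega) using 2 <;> omega
  refine ⟨q, fun i hi => ?_⟩
  rcases Nat.eq_zero_or_pos i with rfl | hi0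
  · -- only the second letter of `mb4 (y k)` is seen; the parity of `y k` comes from `y (k + 1)`
    rw [add_zero, add_zero]
    refine second _ _ ?_ ?_
    · have := val_mod_two_ne_of_mb4_decoding (by omega) hb hy hal h k
      rw [← full 1 le_rfl hm, val_mod_two_of_mb4_fixed hb] at this
      rw [val_mod_two_of_mb4_fixed hb]
      omega
    · rw [← hb q 1 one_lt_two, ← hy k 1 one_lt_two]
      exact hp 0 (by omega)
  · exact full i hi0 (by omega)

theorem not_windowsOccur_of_mb4_fixed (hb : IsUniformImage mb4 2 0 b4 b4) {m : ℕ} (hm : 0 < m)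
    {z : ℕ → Fin 4} (hz : Function.Periodic z m) : ¬ WindowsOccur (m + 1) z b4 := by
  induction m using Nat.strong_induction_on generalizing z with
  | _ m ih =>
  intro h
  obtain ⟨s, hal⟩ := (synchronizing_of_mb4_fixed hb).exists_phaseAligned two_pos (by omega) h
  have hz' := hz.const_add s
  have h' := h.shift s
  obtain ⟨m', rfl⟩ := hal.dvd hz' h'
  obtain ⟨y, hy⟩ := hb.exists_decoding hal (by omega) h'
  exact ih m' (by omega) (by omega) (hy.periodic hz' mb4_eq_of_getD_eq)
    (windowsOccur_of_mb4_decoding (by omega) hb hy hal h')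

end FixedPoint

/-- The length-`5` factors of `g3 w`, each paired with its starting position mod `4`, for any
`w` whose adjacent letters have different parities. -/
def phasedWindows : List (ℕ × List (Fin 3)) :=
  (List.finRange 4).flatMap fun a => (List.finRange 4).flatMap fun b =>
    if a.val % 2 = b.val % 2 then [] else
      (List.range 4).map fun r => (r, (List.range 5).map fun j => (g3 a ++ g3 b).getD (r + j) 0)

theorem g3_eq_of_getD_eq : ∀ c c' : Fin 4,
    (∀ r < 4, (g3 c).getD r 0 = (g3 c').getD r 0) → c = c' := by
  decide

section Image

variable {w : ℕ → Fin 4} {X : ℕ → Fin 3}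

theorem mem_phasedWindows (hX : IsUniformImage g3 4 0 w X)
    (hw : ∀ q, (w q).val % 2 ≠ (w (q + 1)).val % 2) (i : ℕ) :
    (i % 4, (List.range 5).map fun j => X (i + j)) ∈ phasedWindows := by
  have hlen : ∀ c, (g3 c).length = 4 := by decide
  simp only [phasedWindows, List.mem_flatMap, List.mem_finRange, true_and]
  refine ⟨w (i / 4), w (i / 4 + 1), ?_⟩
  rw [if_neg (hw _), List.mem_map]
  refine ⟨i % 4, List.mem_range.2 (Nat.mod_lt _ (by norm_num)), ?_⟩
  simp only [Prod.mk.injEq, true_and]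
  refine List.map_congr_left fun j hj => ?_
  rw [List.mem_range] at hj
  rcases lt_or_ge (i % 4 + j) 4 with h | h
  · rw [List.getD_append _ _ _ _ (by rw [hlen]; exact h), ← hX _ _ h]
    congr 1; omega
  · rw [List.getD_append_right _ _ _ _ (by rw [hlen]; exact h), hlen, ← hX _ _ (by omega)]
    congr 1; omega

theorem synchronizing_g3 (hX : IsUniformImage g3 4 0 w X)
    (hw : ∀ q, (w q).val % 2 ≠ (w (q + 1)).val % 2) : Synchronizing 5 4 X := by
  have key : ∀ p ∈ phasedWindows, ∀ q ∈ phasedWindows, p.2 = q.2 → p.1 = q.1 := by decide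
  intro i i' h
  exact key _ (mem_phasedWindows hX hw i) _ (mem_phasedWindows hX hw i')
    (List.map_congr_left fun j hj => h j (List.mem_range.1 hj))

theorem not_windowsOccur_g3_of_le_five (hX : IsUniformImage g3 4 0 w X)
    (hw : ∀ q, (w q).val % 2 ≠ (w (q + 1)).val % 2) {z : ℕ → Fin 3} {n : ℕ}
    (hz : Function.Periodic z n) (h3 : 3 ≤ n) (h5 : n ≤ 5) : ¬ WindowsOccur n z X := by
  have key : ∀ n ∈ [3, 4, 5], ∀ v ∈ phasedWindows, ∃ k ∈ List.range n,
      (v.2.take n).rotate k ∉ phasedWindows.map (·.2.take n) := by decide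
  intro h
  have factor : ∀ k, ((List.range n).map z).rotate k ∈ phasedWindows.map (·.2.take n) := by
    intro k
    obtain ⟨p, hp⟩ := h k
    refine List.mem_map.2 ⟨_, mem_phasedWindows hX hw p, ?_⟩
    rw [hz.rotate_map_range, ← List.map_take, List.take_range, min_eq_left h5]
    exact List.map_congr_left fun j hj => hp j (List.mem_range.1 hj)
  obtain ⟨v, hv, hvz⟩ := List.mem_map.1 (List.rotate_zero ((List.range n).map z) ▸ factor 0)
  obtain ⟨k, -, hk⟩ := key n (by simp; omega) v hv
  exact hk (hvz ▸ factor k)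

theorem windowsOccur_of_g3_decoding {y : ℕ → Fin 4} {z : ℕ → Fin 3} {m : ℕ} (hm : 0 < m)
    (hX : IsUniformImage g3 4 0 w X) (hy : IsUniformImage g3 4 0 y z)
    (hal : PhaseAligned 4 (4 * m) z X) (h : WindowsOccur (4 * m) z X) :
    WindowsOccur (m + 1) y w := by
  have prefix_eq : ∀ c c' : Fin 4,
      (∀ r < 2, (g3 c).getD r 0 = (g3 c').getD r 0) → c = c' := by decide
  have suffix_eq : ∀ c c' : Fin 4,
      (∀ r < 2, (g3 c).getD (2 + r) 0 = (g3 c').getD (2 + r) 0) → c = c' := by decide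
  intro k
  -- an occurrence in phase `2` sees the second half of `g3 (y k)` and the first halves of the
  -- next `m` blocks
  obtain ⟨p, hp⟩ := h (4 * k + 2)
  obtain ⟨q, rfl⟩ : ∃ q, p = 4 * q + 2 :=
    ⟨p / 4, by have := hal _ _ hp; unfold Nat.ModEq at this; omega⟩
  refine ⟨q, fun i hi => ?_⟩
  rcases Nat.eq_zero_or_pos i with rfl | hi0
  · refine suffix_eq _ _ fun r hr => ?_
    rw [← hX _ _ (by omega), ← hy _ _ (by omega), add_zero, add_zero, ← add_assoc, ← add_assoc]
    exact hp r (by omega)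
  · refine prefix_eq _ _ fun r hr => ?_
    rw [← hX _ _ (by omega), ← hy _ _ (by omega)]
    convert hp (4 * i - 2 + r) (by omega) using 2 <;> omega

theorem not_windowsOccur_g3 (hb : IsUniformImage mb4 2 0 w w) (hX : IsUniformImage g3 4 0 w X)
    {z : ℕ → Fin 3} {n : ℕ} (hz : Function.Periodic z n) (hn : 3 ≤ n) :
    ¬ WindowsOccur n z X := by
  have hw : ∀ q, (w q).val % 2 ≠ (w (q + 1)).val % 2 := fun q => by
    rw [val_mod_two_of_mb4_fixed hb, val_mod_two_of_mb4_fixed hb]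
    omega
  intro h
  rcases le_or_gt n 5 with hsmall | hlarge
  · exact not_windowsOccur_g3_of_le_five hX hw hz hn hsmall h
  obtain ⟨s, hal⟩ := (synchronizing_g3 hX hw).exists_phaseAligned (by norm_num) hlarge h
  have hz' := hz.const_add s
  have h' := h.shift s
  obtain ⟨m, rfl⟩ := hal.dvd hz' h'
  obtain ⟨y, hy⟩ := hX.exists_decoding hal (by omega) h'
  exact not_windowsOccur_of_mb4_fixed hb (by omega) (hy.periodic hz' g3_eq_of_getD_eq)
    (windowsOccur_of_g3_decoding (by omega) hX hy hal h')

end Image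

theorem stmt_4_general (b4 : ℕ → Fin 4)
    (hfix : ∀ n, [b4 (2 * n), b4 (2 * n + 1)] = mb4 (b4 n)) :
    ¬ ∃ u : List (Fin 3), 3 ≤ u.length ∧
        ∀ v w : List (Fin 3), u = w ++ v →
          IsFactorOfInf (v ++ w) (fun n => (g3 (b4 (n / 4))).getD (n % 4) 0) := by
  rintro ⟨u, hu, hconj⟩
  have hz : Function.Periodic (fun t => u.getD (t % u.length) 0) u.length := fun t => by simp
  exact not_windowsOccur_g3 (isUniformImage_mb4_self hfix) (isUniformImage_div_mod g3 4 0 b4)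
    hz hu (windowsOccur_of_forall_conjugate 0 hconj)

/-- If `b₄` is the fixed point starting with `0` of the morphism
`0 ↦ 01, 1 ↦ 21, 2 ↦ 03, 3 ↦ 23`, then the infinite ternary word `g₃(b₄)`
avoids every conjugacy class of length at least `3`: there is no word `u`
with `|u| ≥ 3` all of whose cyclic conjugates are factors of `g₃(b₄)`. -/
theorem stmt_4 (b4 : ℕ → Fin 4) (hb0 : b4 0 = 0)
    (hfix : ∀ n, [b4 (2 * n), b4 (2 * n + 1)] = mb4 (b4 n)) :
    ¬ ∃ u : List (Fin 3), 3 ≤ u.length ∧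
        ∀ v w : List (Fin 3), u = w ++ v →
          IsFactorOfInf (v ++ w) (fun n => (g3 (b4 (n / 4))).getD (n % 4) 0) :=
  stmt_4_general b4 hfix
end

section
/- If a word (finite or infinite) contains an occurrence of the circular formula C_i for some i ≥ 1, then it contains a conjugacy class of length at least i, i.e., there is a finite word u with |u| ≥ i such that every cyclic conjugate of u is a factor of the word. Consequently, a word avoiding every conjugacy class of length at least i avoids every circular formula C_t with t ≥ i. -/
/-- The `i`-th fragment `A_i A_{i+1} … A_{i+t}` of the circular formula `C_t`,
as the list of variable indices (taken modulo `t`), of length `t + 1`. -/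
def circFragment (t i : ℕ) : List ℕ :=
  (List.range (t + 1)).map fun j => (i + j) % t

/-- `h` is an occurrence of the circular formula `C_t` in the infinite word `x`. -/
def CircOcc {α : Type*} (t : ℕ) (h : ℕ → List α) (x : ℕ → α) : Prop :=
  (∀ v < t, h v ≠ []) ∧ ∀ i < t, IsFactorOfInf ((circFragment t i).flatMap h) x

/-- `h` is an occurrence of the circular formula `C_t` in the finite word `w`. -/
def CircOccFin {α : Type*} (t : ℕ) (h : ℕ → List α) (w : List α) : Prop :=
  (∀ v < t, h v ≠ []) ∧ ∀ i < t, ((circFragment t i).flatMap h) <:+: w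

namespace List

variable {α : Type*}

theorem length_le_length_flatten {L : List (List α)} (hL : ∀ l ∈ L, l ≠ []) :
    L.length ≤ L.flatten.length := by
  induction L with
  | nil => simp
  | cons l L ih =>
    simp only [mem_cons, forall_eq_or_imp] at hL
    have hl := length_pos_iff.mpr hL.1
    simp only [length_cons, flatten_cons, length_append]
    have := ih hL.2
    omega

/-- A cyclic conjugate of `l₀ l₁ ⋯ lₙ` starts inside some block `lⱼ` and ends inside the next
occurrence of that block, so it is a factor of `lⱼ ⋯ lₙ l₀ ⋯ lⱼ`. -/
theorem exists_infix_flatten_rotate_append_getElem {L : List (List α)} (hL : L ≠ [])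
    {z v : List α} (h : L.flatten = z ++ v) :
    ∃ j, ∃ hj : j < L.length, v ++ z <:+: (L.rotate j).flatten ++ L[j] := by
  rcases flatten_eq_append_iff.mp h with
    ⟨as, bs, rfl, rfl, rfl⟩ | ⟨as, bs, c, cs, ds, rfl, rfl, rfl⟩
  · refine ⟨as.length % (as ++ bs).length, Nat.mod_lt _ (length_pos_iff.mpr hL), ?_⟩
    rw [rotate_mod, rotate_append_length_eq, flatten_append]
    exact (prefix_append _ _).isInfix
  · refine ⟨as.length, by simp, ⟨bs, c :: cs, ?_⟩⟩
    simp [rotate_append_length_eq]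

end List

section

variable {α : Type*}

theorem isFactorOfInf_iff {u : List α} {x : ℕ → α} :
    IsFactorOfInf u x ↔ ∃ n, ∀ k (hk : k < u.length), u[k] = x (n + k) := by
  refine exists_congr fun n => ⟨fun h k hk => ?_, fun h => ?_⟩
  · simpa [hk] using congrArg (·[k]?) h
  · exact List.ext_getElem (by simp) fun k hk _ => by simp [h k hk]

theorem IsFactorOfInf.of_infix {u' u : List α} {x : ℕ → α} (h : u' <:+: u)
    (hu : IsFactorOfInf u x) : IsFactorOfInf u' x := by
  obtain ⟨k, -, hk⟩ := List.infix_iff_getElem?.mp h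
  obtain ⟨n, hn⟩ := isFactorOfInf_iff.mp hu
  refine isFactorOfInf_iff.mpr ⟨n + k, fun i hi => ?_⟩
  obtain ⟨_, hu'⟩ := List.getElem?_eq_some_iff.mp (hk i hi)
  rw [← hu', hn, Nat.add_right_comm, Nat.add_assoc]

theorem circFragment_eq {t j : ℕ} (hj : j < t) :
    circFragment t j = (List.range t).rotate j ++ [j] := by
  rw [circFragment, List.range_succ, List.map_append]
  congr 1
  · exact List.ext_getElem (by simp) fun k _ _ => by simp [List.getElem_rotate, Nat.add_comm]
  · simp [Nat.mod_eq_of_lt hj]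

theorem flatMap_circFragment {t j : ℕ} (hj : j < t) (h : ℕ → List α) :
    (circFragment t j).flatMap h = (((List.range t).map h).rotate j).flatten ++ h j := by
  simp [circFragment_eq hj, List.flatMap_def, List.map_rotate]

/-- `IsFactor u` stands for "`u` is a factor of a fixed finite or infinite word". -/
def HasConjClass (IsFactor : List α → Prop) (n : ℕ) : Prop :=
  ∃ u : List α, n ≤ u.length ∧ ∀ v z : List α, u = z ++ v → IsFactor (v ++ z)

theorem HasConjClass.mono {IsFactor : List α → Prop} {m n : ℕ} (hmn : m ≤ n)
    (h : HasConjClass IsFactor n) : HasConjClass IsFactor m :=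
  let ⟨u, hu, hconj⟩ := h
  ⟨u, hmn.trans hu, hconj⟩

theorem hasConjClass_of_forall_circFragment {IsFactor : List α → Prop}
    (of_infix : ∀ u' u, u' <:+: u → IsFactor u → IsFactor u') (nil : IsFactor [])
    {t : ℕ} {h : ℕ → List α} (hne : ∀ v < t, h v ≠ [])
    (hfrag : ∀ j < t, IsFactor ((circFragment t j).flatMap h)) :
    HasConjClass IsFactor t := by
  refine ⟨((List.range t).map h).flatten, ?_, fun v z hu => ?_⟩
  · simpa using List.length_le_length_flatten (L := (List.range t).map h) (by simpa using hne)
  rcases Nat.eq_zero_or_pos t with rfl | ht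
  · obtain ⟨rfl, rfl⟩ := List.append_eq_nil_iff.mp (by simpa using hu.symm)
    exact nil
  obtain ⟨j, hj, hinf⟩ := List.exists_infix_flatten_rotate_append_getElem
    (L := (List.range t).map h) (by simpa using ht.ne') hu
  rw [List.length_map, List.length_range] at hj
  refine of_infix _ _ hinf ?_
  simpa [flatMap_circFragment hj] using hfrag j hj

theorem CircOccFin.hasConjClass {t : ℕ} {h : ℕ → List α} {w : List α} (hocc : CircOccFin t h w) :
    HasConjClass (· <:+: w) t :=
  hasConjClass_of_forall_circFragment (fun _ _ => List.IsInfix.trans) List.nil_infix hocc.1 hocc.2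

theorem CircOcc.hasConjClass {t : ℕ} {h : ℕ → List α} {x : ℕ → α} (hocc : CircOcc t h x) :
    HasConjClass (IsFactorOfInf · x) t :=
  hasConjClass_of_forall_circFragment (fun _ _ => IsFactorOfInf.of_infix) ⟨0, rfl⟩ hocc.1 hocc.2

end

theorem stmt_6_general {α : Type*} (i : ℕ) :
    (∀ w : List α, (∃ h : ℕ → List α, CircOccFin i h w) →
      ∃ u : List α, i ≤ u.length ∧ ∀ v z : List α, u = z ++ v → (v ++ z) <:+: w) ∧
    (∀ x : ℕ → α, (∃ h : ℕ → List α, CircOcc i h x) →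
      ∃ u : List α, i ≤ u.length ∧ ∀ v z : List α, u = z ++ v → IsFactorOfInf (v ++ z) x) ∧
    (∀ w : List α,
      (¬ ∃ u : List α, i ≤ u.length ∧ ∀ v z : List α, u = z ++ v → (v ++ z) <:+: w) →
      ∀ t, i ≤ t → ¬ ∃ h : ℕ → List α, CircOccFin t h w) ∧
    (∀ x : ℕ → α,
      (¬ ∃ u : List α, i ≤ u.length ∧ ∀ v z : List α, u = z ++ v → IsFactorOfInf (v ++ z) x) →
      ∀ t, i ≤ t → ¬ ∃ h : ℕ → List α, CircOcc t h x) :=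
  ⟨fun _ ⟨_, hocc⟩ => hocc.hasConjClass,
    fun _ ⟨_, hocc⟩ => hocc.hasConjClass,
    fun _ hw _ hit ⟨_, hocc⟩ => hw (hocc.hasConjClass.mono hit),
    fun _ hx _ hit ⟨_, hocc⟩ => hx (hocc.hasConjClass.mono hit)⟩

/-- If a word (finite or infinite) contains an occurrence of the circular
formula `C_i` with `i ≥ 1`, then it contains a conjugacy class of length at
least `i`: some word `u` with `|u| ≥ i` has all of its cyclic conjugates as
factors.  Consequently, a word avoiding every conjugacy class of length at
least `i` avoids every circular formula `C_t` with `t ≥ i`. -/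
theorem stmt_6 {α : Type*} (i : ℕ) (hi : 1 ≤ i) :
    (∀ w : List α, (∃ h : ℕ → List α, CircOccFin i h w) →
      ∃ u : List α, i ≤ u.length ∧ ∀ v z : List α, u = z ++ v → (v ++ z) <:+: w) ∧
    (∀ x : ℕ → α, (∃ h : ℕ → List α, CircOcc i h x) →
      ∃ u : List α, i ≤ u.length ∧ ∀ v z : List α, u = z ++ v → IsFactorOfInf (v ++ z) x) ∧
    (∀ w : List α,
      (¬ ∃ u : List α, i ≤ u.length ∧ ∀ v z : List α, u = z ++ v → (v ++ z) <:+: w) →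
      ∀ t, i ≤ t → ¬ ∃ h : ℕ → List α, CircOccFin t h w) ∧
    (∀ x : ℕ → α,
      (¬ ∃ u : List α, i ≤ u.length ∧ ∀ v z : List α, u = z ++ v → IsFactorOfInf (v ++ z) x) →
      ∀ t, i ≤ t → ¬ ∃ h : ℕ → List α, CircOcc t h x) :=
  stmt_6_general i
end

section
/- Let v be a finite word that is (97/75+, 61)-free, i.e., v contains no factor with period p ≥ 61 and length strictly greater than (97/75)·p. If h is an occurrence of the formula ABCBA.CBABC in v, with a = |h(A)|, b = |h(B)|, c = |h(C)|, then a + b ≤ 60 and b + c ≤ 60. -/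
/-!
If `a + b ≥ 61`, the factors `BAB`, `ABCBA` and `CBABC` have periods `a + b`, `a + 2b + c` and
`c + 2b + a`, all at least `61`, so freeness bounds their exponents by `97/75`:
`53b ≤ 22a`, `53a ≤ 44b + 22c` and `53c ≤ 44b + 22a`. Eliminating `c` gives `31a ≤ 44b`, which
together with the first inequality forces `a = b = 0`. Exchanging `A` and `C` swaps the two
fragments, so the bound on `b + c` follows from the one on `a + b`.
-/

/-- The finite word `r` has period `p`: `r_{i+p} = r_i` whenever `i + p < |r|`. -/
def HasPeriod {α : Type*} (r : List α) (p : ℕ) : Prop :=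
  ∀ i, i + p < r.length → r[i]? = r[i + p]?

section

variable {α : Type*}

theorem hasPeriod_append_append_self (x y : List α) :
    HasPeriod (x ++ y ++ x) (x.length + y.length) := by
  intro i hi
  simp only [List.length_append] at hi
  rw [List.append_assoc, List.getElem?_append_left (by omega),
    List.getElem?_append_right (by omega), List.getElem?_append_right (by omega)]
  congr 1
  omega

theorem length_mul_le_of_hasPeriod {v r : List α} {l e d p : ℕ}
    (hv : ¬ ∃ (r : List α) (p : ℕ), r <:+: v ∧ l ≤ p ∧ HasPeriod r p ∧ e * p < d * r.length)
    (hr : r <:+: v) (hp : l ≤ p) (hper : HasPeriod r p) :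
    d * r.length ≤ e * p :=
  not_lt.mp fun hlt => hv ⟨r, p, hr, hp, hper, hlt⟩

theorem length_append_append_self_le {v x y : List α}
    (hv : ¬ ∃ (r : List α) (p : ℕ),
        r <:+: v ∧ 61 ≤ p ∧ HasPeriod r p ∧ 97 * p < 75 * r.length)
    (hxyx : x ++ y ++ x <:+: v) (hp : 61 ≤ x.length + y.length) :
    75 * (2 * x.length + y.length) ≤ 97 * (x.length + y.length) := by
  have := length_mul_le_of_hasPeriod hv hxyx hp (hasPeriod_append_append_self x y)
  simp only [List.length_append] at this
  omega

theorem length_add_length_le_of_formula {v hA hB hC : List α}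
    (hv : ¬ ∃ (r : List α) (p : ℕ),
        r <:+: v ∧ 61 ≤ p ∧ HasPeriod r p ∧ 97 * p < 75 * r.length)
    (h1 : hA ++ hB ++ hC ++ hB ++ hA <:+: v) (h2 : hC ++ hB ++ hA ++ hB ++ hC <:+: v) :
    hA.length + hB.length ≤ 60 := by
  by_contra! hab
  have hBAB : hB ++ hA ++ hB <:+: v :=
    List.IsInfix.trans ⟨hC, hC, by simp only [List.append_assoc]⟩ h2
  have hABCBA : hA ++ (hB ++ hC ++ hB) ++ hA <:+: v := by simpa only [List.append_assoc] using h1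
  have hCBABC : hC ++ (hB ++ hA ++ hB) ++ hC <:+: v := by simpa only [List.append_assoc] using h2
  have iBAB := length_append_append_self_le hv hBAB (by omega)
  have iABCBA := length_append_append_self_le hv hABCBA (by simp only [List.length_append]; omega)
  have iCBABC := length_append_append_self_le hv hCBABC (by simp only [List.length_append]; omega)
  simp only [List.length_append] at iABCBA iCBABC
  omega

end

theorem stmt_16_general {α : Type*} (v : List α)
    (hv : ¬ ∃ (r : List α) (p : ℕ),
        r <:+: v ∧ 61 ≤ p ∧ HasPeriod r p ∧ 97 * p < 75 * r.length)
    (hA hB hC : List α)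
    (h1 : (hA ++ hB ++ hC ++ hB ++ hA) <:+: v)
    (h2 : (hC ++ hB ++ hA ++ hB ++ hC) <:+: v) :
    hA.length + hB.length ≤ 60 ∧ hB.length + hC.length ≤ 60 :=
  ⟨length_add_length_le_of_formula hv h1 h2,
    (Nat.add_comm _ _).trans_le (length_add_length_le_of_formula hv h2 h1)⟩

/-- Let `v` be a `(97/75⁺, 61)`-free finite word (no factor with a period
`p ≥ 61` and length `> (97/75)·p`).  If `h` is an occurrence of the formula
`ABCBA.CBABC` in `v`, with `a = |h(A)|`, `b = |h(B)|`, `c = |h(C)|`, then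
`a + b ≤ 60` and `b + c ≤ 60`. -/
theorem stmt_16 {α : Type*} (v : List α)
    (hv : ¬ ∃ (r : List α) (p : ℕ),
        r <:+: v ∧ 61 ≤ p ∧ HasPeriod r p ∧ 97 * p < 75 * r.length)
    (hA hB hC : List α) (hAne : hA ≠ []) (hBne : hB ≠ []) (hCne : hC ≠ [])
    (h1 : (hA ++ hB ++ hC ++ hB ++ hA) <:+: v)
    (h2 : (hC ++ hB ++ hA ++ hB ++ hC) <:+: v) :
    hA.length + hB.length ≤ 60 ∧ hB.length + hC.length ≤ 60 :=
  stmt_16_general v hv hA hB hC h1 h2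
end

section
/- Let v be a finite word that is (13/10+, 25)-free, i.e., v contains no factor with period p ≥ 25 and length strictly greater than (13/10)·p. If h is an occurrence of the formula ABCA.CABC.BCB (or of the formula ABCA.BCAB.CBC) in v, with a = |h(A)|, b = |h(B)|, c = |h(C)|, then b + c ≤ 24 and a ≤ 22. -/
lemma period_xyx {α : Type*} (x y : List α) :
    HasPeriod (x ++ y ++ x) (x.length + y.length) := by
  intro i hi
  simp only [List.length_append] at hi
  have hix : i < x.length := by omega
  rw [List.append_assoc, List.getElem?_append_left hix,
    List.getElem?_append_right (by omega : x.length ≤ i + (x.length + y.length)),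
    List.getElem?_append_right
      (by omega : y.length ≤ i + (x.length + y.length) - x.length)]
  congr 1
  omega

lemma key_free {α : Type*} {v : List α}
    (hv : ¬ ∃ (r : List α) (p : ℕ),
        r <:+: v ∧ 25 ≤ p ∧ HasPeriod r p ∧ 13 * p < 10 * r.length)
    (x y : List α) (hfac : x ++ y ++ x <:+: v) :
    x.length + y.length ≤ 24 ∨ 7 * x.length ≤ 3 * y.length := by
  by_contra h
  push_neg at h
  exact hv ⟨x ++ y ++ x, x.length + y.length, hfac, by omega, period_xyx x y,
    by simp only [List.length_append]; omega⟩

/-- Let `v` be a `(13/10⁺, 25)`-free finite word (no factor with a period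
`p ≥ 25` and length `> (13/10)·p`).  If `h` is an occurrence of the formula
`ABCA.CABC.BCB`, or of the formula `ABCA.BCAB.CBC`, in `v`, with
`a = |h(A)|`, `b = |h(B)|`, `c = |h(C)|`, then `b + c ≤ 24` and `a ≤ 22`. -/
theorem stmt_17 {α : Type*} (v : List α)
    (hv : ¬ ∃ (r : List α) (p : ℕ),
        r <:+: v ∧ 25 ≤ p ∧ HasPeriod r p ∧ 13 * p < 10 * r.length)
    (hA hB hC : List α) (hAne : hA ≠ []) (hBne : hB ≠ []) (hCne : hC ≠ [])
    (hocc : ((hA ++ hB ++ hC ++ hA) <:+: v ∧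
             (hC ++ hA ++ hB ++ hC) <:+: v ∧
             (hB ++ hC ++ hB) <:+: v) ∨
            ((hA ++ hB ++ hC ++ hA) <:+: v ∧
             (hB ++ hC ++ hA ++ hB) <:+: v ∧
             (hC ++ hB ++ hC) <:+: v)) :
    hB.length + hC.length ≤ 24 ∧ hA.length ≤ 22 := by
  have ha : 0 < hA.length := List.length_pos_iff.mpr hAne
  have hb : 0 < hB.length := List.length_pos_iff.mpr hBne
  have hc : 0 < hC.length := List.length_pos_iff.mpr hCne
  rcases hocc with ⟨h1, h2, h3⟩ | ⟨h1, h2, h3⟩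
  · have k1 := key_free hv hA (hB ++ hC)
      (by rw [show hA ++ (hB ++ hC) ++ hA = hA ++ hB ++ hC ++ hA by
        simp [List.append_assoc]]; exact h1)
    have k2 := key_free hv hC (hA ++ hB)
      (by rw [show hC ++ (hA ++ hB) ++ hC = hC ++ hA ++ hB ++ hC by
        simp [List.append_assoc]]; exact h2)
    have k3 := key_free hv hB hC h3
    simp only [List.length_append] at k1 k2 k3
    omega
  · have k1 := key_free hv hA (hB ++ hC)
      (by rw [show hA ++ (hB ++ hC) ++ hA = hA ++ hB ++ hC ++ hA by
        simp [List.append_assoc]]; exact h1)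
    have k2 := key_free hv hB (hC ++ hA)
      (by rw [show hB ++ (hC ++ hA) ++ hB = hB ++ hC ++ hA ++ hB by
        simp [List.append_assoc]]; exact h2)
    have k3 := key_free hv hC hB h3
    simp only [List.length_append] at k1 k2 k3
    omega
end
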